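/- Suppose z ∈ ℂ \ σ(h₀) and the restriction of v + v r⁰(z) v to the subspace Π H is invertible as an operator on Π H; define Q(z) = v ∘ ((v + v r⁰(z) v)|_{ΠH})⁻¹ ∘ v. Then h - z is boundedly invertible and its inverse is r(z) = r⁰(z) - r⁰(z) Q(z) r⁰(z). -/

import Mathlib

/-!
With `a = h₀ - z` and `Q = v B v`, multiplying out shows that `r⁰ - r⁰ Q r⁰` inverts `a + v`
on the right as soon as `Q + v r⁰ Q = v`, and on the left as soon as `Q + Q r⁰ v = v`.
Both identities come from `B` inverting `T = v + v r⁰ v` on `(ker v)ᗮ`: the first because `v`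
is self-adjoint, so its range lies in `(ker v)ᗮ`; the second because `v B T` and `v` both
vanish on `ker v` and agree on `(ker v)ᗮ`, and these two subspaces span `H`.
-/

section Ring

variable {R : Type*} [Ring R] {a r v b : R}

theorem add_mul_sub_mul_mul_eq_one (har : a * r = 1) (hb : (v + v * r * v) * b * v = v) :
    (a + v) * (r - r * (v * b * v) * r) = 1 := by
  calc (a + v) * (r - r * (v * b * v) * r)
      = a * r - a * r * (v * b * v) * r + (v - (v + v * r * v) * b * v) * r
          + v * b * v * r := by
        noncomm_ring
    _ = 1 := by rw [har, hb]; noncomm_ring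

theorem sub_mul_mul_mul_add_eq_one (hra : r * a = 1) (hb : v * b * (v + v * r * v) = v) :
    (r - r * (v * b * v) * r) * (a + v) = 1 := by
  calc (r - r * (v * b * v) * r) * (a + v)
      = r * a - r * (v * b * v) * (r * a) + r * (v - v * b * (v + v * r * v))
          + r * (v * b * v) := by
        noncomm_ring
    _ = 1 := by rw [hra, hb]; noncomm_ring

end Ring

section InnerProductSpace

variable {𝕜 E : Type*} [RCLike 𝕜] [NormedAddCommGroup E] [InnerProductSpace 𝕜 E]
  [CompleteSpace E]

theorem IsSelfAdjoint.apply_mem_orthogonal_ker {v : E →L[𝕜] E} (hv : IsSelfAdjoint v) (x : E) :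
    v x ∈ (LinearMap.ker (v : E →ₗ[𝕜] E))ᗮ := by
  rw [v.orthogonal_ker, hv.adjoint_eq]
  exact Submodule.le_topologicalClosure _ ⟨x, rfl⟩

theorem IsSelfAdjoint.comp_comp_eq_of_leftInvOn {v T B : E →L[𝕜] E} (hv : IsSelfAdjoint v)
    (hB : Set.LeftInvOn T B (LinearMap.ker (v : E →ₗ[𝕜] E))ᗮ) : T ∘L B ∘L v = v :=
  ContinuousLinearMap.ext fun x ↦ hB (hv.apply_mem_orthogonal_ker x)

theorem ContinuousLinearMap.comp_comp_eq_of_ker_le_of_leftInvOn {v T B : E →L[𝕜] E}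
    (hT : LinearMap.ker (v : E →ₗ[𝕜] E) ≤ LinearMap.ker (T : E →ₗ[𝕜] E))
    (hB : Set.LeftInvOn B T (LinearMap.ker (v : E →ₗ[𝕜] E))ᗮ) : v ∘L B ∘L T = v := by
  set K := LinearMap.ker (v : E →ₗ[𝕜] E)
  have : CompleteSpace K := (isClosed_ker v).completeSpace_coe
  refine LinearMap.ext_on_codisjoint K.isCompl_orthogonal.codisjoint (fun x hx ↦ ?_)
    (fun x hx ↦ ?_)
  · have hTx : T x = 0 := hT hx
    have hvx : v x = 0 := hx
    simp [hTx, hvx]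
  · simp [hB hx]

end InnerProductSpace

theorem resolvent_formula_general {H : Type*} [NormedAddCommGroup H] [InnerProductSpace ℂ H]
    [CompleteSpace H]
    (h₀ v : H →L[ℂ] H) (hv : IsSelfAdjoint v)
    (z : ℂ) (r0 : H →L[ℂ] H)
    (hr0 : (h₀ - z • 1) ∘L r0 = 1 ∧ r0 ∘L (h₀ - z • 1) = 1)
    (B : H →L[ℂ] H)
    (hB : ∀ x ∈ (LinearMap.ker (v : H →ₗ[ℂ] H))ᗮ,
      B ((v + v ∘L r0 ∘L v) x) = x ∧ (v + v ∘L r0 ∘L v) (B x) = x) :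
    ((h₀ + v) - z • 1) ∘L (r0 - r0 ∘L (v ∘L B ∘L v) ∘L r0) = 1 ∧
    (r0 - r0 ∘L (v ∘L B ∘L v) ∘L r0) ∘L ((h₀ + v) - z • 1) = 1 := by
  have hleft : (v + v * r0 * v) * B * v = v :=
    hv.comp_comp_eq_of_leftInvOn fun x hx ↦ (hB x hx).2
  have hright : v * B * (v + v * r0 * v) = v :=
    ContinuousLinearMap.comp_comp_eq_of_ker_le_of_leftInvOn
      (fun x (hx : v x = 0) ↦ by simp [hx]) fun x hx ↦ (hB x hx).1
  rw [show (h₀ + v) - z • 1 = (h₀ - z • 1) + v by abel]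
  exact ⟨add_mul_sub_mul_mul_eq_one hr0.1 hleft, sub_mul_mul_mul_add_eq_one hr0.2 hright⟩

/-- If the restriction of `v + v r⁰(z) v` to `ΠH = (ker v)^⊥` is invertible, then
`h - z` is boundedly invertible with inverse `r(z) = r⁰(z) - r⁰(z) Q(z) r⁰(z)`,
where `Q(z) = v ((v + v r⁰(z) v)|_{ΠH})⁻¹ v`. -/
theorem resolvent_formula {H : Type*} [NormedAddCommGroup H] [InnerProductSpace ℂ H]
    [CompleteSpace H]
    (h₀ v : H →L[ℂ] H) (hh₀ : IsSelfAdjoint h₀) (hv : IsSelfAdjoint v)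
    (hfr : FiniteDimensional ℂ (LinearMap.range (v : H →ₗ[ℂ] H)))
    (z : ℂ) (hz : z ∉ spectrum ℂ h₀) (r0 : H →L[ℂ] H)
    (hr0 : (h₀ - z • 1) ∘L r0 = 1 ∧ r0 ∘L (h₀ - z • 1) = 1)
    (B : H →L[ℂ] H)
    (hBmem : ∀ x : H, B x ∈ (LinearMap.ker (v : H →ₗ[ℂ] H))ᗮ)
    (hB : ∀ x ∈ (LinearMap.ker (v : H →ₗ[ℂ] H))ᗮ,
      B ((v + v ∘L r0 ∘L v) x) = x ∧ (v + v ∘L r0 ∘L v) (B x) = x) :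
    ((h₀ + v) - z • 1) ∘L (r0 - r0 ∘L (v ∘L B ∘L v) ∘L r0) = 1 ∧
    (r0 - r0 ∘L (v ∘L B ∘L v) ∘L r0) ∘L ((h₀ + v) - z • 1) = 1 :=
  resolvent_formula_general h₀ v hv z r0 hr0 B hB
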